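/- Let O ⊆ P contain A. For any integral dominant weights λ and μ, the lattice points of the marked chain-order polytope satisfy the Minkowski sum property: 𝒬_O(λ+μ) ∩ ℤ^P = (𝒬_O(λ) ∩ ℤ^P) + (𝒬_O(μ) ∩ ℤ^P). -/

import Mathlib

open scoped Classical Pointwise

noncomputable section

/-- Position of `j` in the total order `1 ⋖ … ⋖ n ⋖ -n ⋖ … ⋖ -1` on `N`. -/
def ordKey (n : ℕ) (j : ℤ) : ℤ := if 0 < j then j else 2 * n + 1 + j

/-- Membership in the type C Gelfand–Tsetlin poset `P`:
pairs `(i,j)` with `1 ≤ i ≤ n` and `i ≤ |j| ≤ n`. -/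
def inP (n : ℕ) (p : ℤ × ℤ) : Prop :=
  1 ≤ p.1 ∧ p.1 ≤ (n : ℤ) ∧ p.1 ≤ |p.2| ∧ |p.2| ≤ (n : ℤ)

/-- The order relation `⪯` of `P`: `(i₁,j₁) ⪯ (i₂,j₂)` iff `i₁ ≤ i₂` and `j₁ ⩽̇ j₂`. -/
def ple (n : ℕ) (p q : ℤ × ℤ) : Prop :=
  p.1 ≤ q.1 ∧ ordKey n p.2 ≤ ordKey n q.2

/-- Strict version of `⪯`. -/
def plt (n : ℕ) (p q : ℤ × ℤ) : Prop := ple n p q ∧ p ≠ q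

/-- The elements of `N = {1,…,n,-n,…,-1}` listed in increasing `⋖` order. -/
def jList (n : ℕ) : List ℤ :=
  ((List.range n).map fun t => (t : ℤ) + 1) ++ ((List.range n).map fun t => (t : ℤ) - n)

/-- All pairs `(i,j)` with `i ∈ [1,n]`, `j ∈ N`, ordered first by `i` increasing,
then by `j` increasing with respect to `⋖`. -/
def posList (n : ℕ) : List (ℤ × ℤ) :=
  (List.range n).flatMap fun a => (jList n).map fun j => ((a : ℤ) + 1, j)

/-- `P` as a finite set. -/
def Pfin (n : ℕ) : Finset (ℤ × ℤ) := (posList n).toFinset.filter (inP n)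

/-- `N` as a finite set. -/
def Nfin (n : ℕ) : Finset ℤ := (jList n).toFinset

/-- The diagonal `A = {(i,i) : 1 ≤ i ≤ n}`. -/
def Aset (n : ℕ) : Finset (ℤ × ℤ) :=
  (Finset.range n).image fun t => (((t : ℤ) + 1, (t : ℤ) + 1) : ℤ × ℤ)

/-- Order ideals (downward closed subsets) of `P`. -/
def IsIdeal (n : ℕ) (J : Finset (ℤ × ℤ)) : Prop :=
  (∀ p ∈ J, inP n p) ∧ ∀ p ∈ J, ∀ q ∈ Pfin n, ple n q p → q ∈ J

/-- The set of `≺`-maximal elements of `J`. -/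
def maxPrec (n : ℕ) (J : Finset (ℤ × ℤ)) : Finset (ℤ × ℤ) :=
  J.filter fun p => ∀ q ∈ J, ple n p q → q = p

/-- `M_O(J) = (J ∩ O) ∪ max_≺(J)`. -/
def MO (n : ℕ) (O J : Finset (ℤ × ℤ)) : Finset (ℤ × ℤ) := (J ∩ O) ∪ maxPrec n J

/-- The permutation `w_M`: the product of the transpositions `s_{i,j}` over `(i,j) ∈ M`,
ordered first by `i` increasing and then by `j` increasing with respect to `⋖`
(the leftmost factor acts last). -/
def wPerm (n : ℕ) (M : Finset (ℤ × ℤ)) : Equiv.Perm ℤ :=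
  (((posList n).filter fun p => decide (p ∈ M)).map fun p => Equiv.swap p.1 p.2).prod

/-- `w^{O,J} = w_O⁻¹ ⬝ w_{M_O(J)}`. -/
def wOJ (n : ℕ) (O J : Finset (ℤ × ℤ)) : Equiv.Perm ℤ :=
  (wPerm n O)⁻¹ * wPerm n (MO n O J)

/-- The principal order ideal `⟨i,j⟩` of `(i,j) ∈ P`. -/
def princ (n : ℕ) (p : ℤ × ℤ) : Finset (ℤ × ℤ) := (Pfin n).filter fun q => ple n q p

/-- `r(i,j) = w^{O,⟨i,j⟩}(i)`. -/
def rMap (n : ℕ) (O : Finset (ℤ × ℤ)) (i j : ℤ) : ℤ := wOJ n O (princ n (i, j)) i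

/-- Inverse of `ordKey` (on the relevant range `[1, 2n]`). -/
def invOrdKey (n : ℕ) (t : ℤ) : ℤ := if t ≤ (n : ℤ) then t else t - (2 * n + 1)

/-- The `⋖`-maximal `j'` with `j' ⋖ j` and `(i,j') ∈ O`. -/
def prevO (n : ℕ) (O : Finset (ℤ × ℤ)) (i j : ℤ) : ℤ :=
  invOrdKey n (((((Nfin n).filter fun j' => (i, j') ∈ O ∧ ordKey n j' < ordKey n j).image
    (ordKey n)).max).unbotD 0)

/-- The pipe-dream linear transform `ξ` of `ℝ^P` (coordinates outside `P` are untouched):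
`ξ(ε_{i,i}) = ε_{i,r(i,i)}` and `ξ(ε_{i,j}) = ε_{i,r(i,j)} - ε_{i,r(i,j')}` for `j ≠ i`,
where `j'` is `⋖`-maximal with `j' ⋖ j` and `(i,j') ∈ O`. -/
def xiMap (n : ℕ) (O : Finset (ℤ × ℤ)) (x : (ℤ × ℤ) → ℝ) : (ℤ × ℤ) → ℝ := fun q =>
  if inP n q then
    (∑ j ∈ (Nfin n).filter (fun j => inP n (q.1, j) ∧ rMap n O q.1 j = q.2), x (q.1, j))
    - (∑ j ∈ (Nfin n).filter
        (fun j => inP n (q.1, j) ∧ j ≠ q.1 ∧ rMap n O q.1 (prevO n O q.1 j) = q.2), x (q.1, j))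
  else x q

/-- Indicator vector `1_{M_O(J)} ∈ ℝ^P`. -/
def indicMO (n : ℕ) (O J : Finset (ℤ × ℤ)) : (ℤ × ℤ) → ℝ := fun p =>
  if p ∈ MO n O J then 1 else 0

/-- The fundamental marked chain-order polytope `𝒬_O(ω_k)`:
the convex hull of the vectors `1_{M_O(J)}`, `J ∈ 𝒥ₖ`. -/
def QOfund (n : ℕ) (O : Finset (ℤ × ℤ)) (k : ℕ) : Set ((ℤ × ℤ) → ℝ) :=
  convexHull ℝ {x | ∃ J : Finset (ℤ × ℤ),
    IsIdeal n J ∧ (J ∩ Aset n).card = k ∧ x = indicMO n O J}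

/-- The marked chain-order polytope `𝒬_O(λ)` for `λ = a₁ω₁ + … + a_nω_n`:
the Minkowski sum `a₁𝒬_O(ω₁) + … + a_n𝒬_O(ω_n)`. -/
def QO (n : ℕ) (O : Finset (ℤ × ℤ)) (a : ℕ → ℕ) : Set ((ℤ × ℤ) → ℝ) :=
  ∑ k ∈ Finset.Icc 1 n, a k • QOfund n O k

/-- Integrality (lattice point) predicate. -/
def IsLat (x : (ℤ × ℤ) → ℝ) : Prop := ∀ p, ∃ m : ℤ, x p = m

/-- Type B: `λ(i) = a_i + … + a_{n-1} + a_n/2`. -/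
def lamB (n : ℕ) (a : ℕ → ℕ) (i : ℤ) : ℝ :=
  (∑ t ∈ Finset.Icc i.toNat (n - 1), (a t : ℝ)) + (a n : ℝ) / 2

/-- The type B poset polytope `𝒬^B_O(λ)` (H-description with factor `1/2`
on the coordinates in `B = {(i,-i)}`). -/
def QB (n : ℕ) (O : Finset (ℤ × ℤ)) (lam : ℤ → ℝ) : Set ((ℤ × ℤ) → ℝ) :=
  {x | (∀ i : ℤ, 1 ≤ i → i ≤ (n : ℤ) → x (i, i) = lam i) ∧
    (∀ p, inP n p → 0 ≤ x p) ∧ (∀ p, ¬ inP n p → x p = 0) ∧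
    ∀ (pq rs : ℤ × ℤ) (c : List (ℤ × ℤ)), pq ∈ O → inP n rs →
      (∀ q ∈ c, inP n q ∧ q ∉ O) →
      List.Chain' (plt n) (pq :: (c ++ [rs])) →
      (c.map x).sum ≤ x pq - (if rs.2 = -rs.1 then (1 : ℝ) / 2 else 1) * x rs}

/-- The point `x^{J,D}`. -/
def xJD (n : ℕ) (O J : Finset (ℤ × ℤ)) (D : Finset ℤ) : (ℤ × ℤ) → ℝ := fun p =>
  if p ∈ MO n O J then (if p.2 = -p.1 ∧ p.1 ∉ D then 2 else 1) else 0

/-- The projection `π : ℝ^P → ℝ^{P∖A}` (realized by zeroing the `A`-coordinates). -/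
def piA (x : (ℤ × ℤ) → ℝ) : (ℤ × ℤ) → ℝ := fun p => if p.2 = p.1 then 0 else x p

/-- The transformed type B poset polytope `Π^B_O(λ) = πξ(𝒬^B_O(λ))`. -/
def PiB (n : ℕ) (O : Finset (ℤ × ℤ)) (a : ℕ → ℕ) : Set ((ℤ × ℤ) → ℝ) :=
  (fun x => piA (xiMap n O x)) '' QB n O (lamB n a)

/-- The point `y^D ∈ ℝ^{P∖A}`. -/
def yD (D : Finset ℤ) : (ℤ × ℤ) → ℝ := fun p => if p.2 = -p.1 ∧ p.1 ∈ D then 1 else 0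


/-!
Every point of `𝒬_O(λ)` satisfies the inequalities `QOIneq`: nonnegativity, `x(i,i) = λ(i)`, and
`∑_{q ∈ C} x_q ≤ x_p` for `p ∈ O` and every chain `C` above `p` that meets `O` at most in its top.
For a lattice point `x` satisfying them, let `U(p)` be the largest sum of `x` along such a chain
starting at `p`. The level sets `J_t = {U ≥ t}`, `1 ≤ t ≤ λ(1)`, are order ideals, `p` lies in
`M_O(J_t)` exactly when `U(p) - x_p < t ≤ U(p)`, so `x = ∑_t 1_{M_O(J_t)}`, and `|J_t ∩ A| = k`
for exactly `c_k` values of `t`. Hence the lattice points of `𝒬_O(∑ c_k ω_k)` are the sums of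
`c_k` vertices of `𝒬_O(ω_k)` for each `k`, a description that is additive in `λ`.
-/

open Finset

theorem Finset.mem_iff_le_card {D : Finset ℕ} (hD1 : ∀ j ∈ D, 1 ≤ j)
    (hD : ∀ j ∈ D, ∀ i, 1 ≤ i → i ≤ j → i ∈ D) {i : ℕ} (hi : 1 ≤ i) : i ∈ D ↔ i ≤ D.card := by
  constructor
  · intro hiD
    simpa using card_le_card fun j hj => hD i hiD j (mem_Icc.1 hj).1 (mem_Icc.1 hj).2
  · intro hle
    by_contra hiD
    have hsub : D ⊆ Icc 1 (i - 1) := fun j hj =>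
      mem_Icc.2 ⟨hD1 j hj, by by_contra; exact hiD (hD j hj i hi (by omega))⟩
    have := card_le_card hsub
    simp only [Nat.card_Icc] at this
    omega

theorem sum_Icc_sum_Ioc_of_antitone {M : Type*} [AddCommMonoid M] {f : ℕ → ℕ} (hf : Antitone f)
    (g : ℕ → M) (m : ℕ) :
    ∑ k ∈ Icc 1 m, ∑ t ∈ Ioc (f (k + 1)) (f k), g t = ∑ t ∈ Ioc (f (m + 1)) (f 1), g t := by
  induction m with
  | zero => simp
  | succ m ih =>
    rw [sum_Icc_succ_top (by omega), ih, add_comm,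
      sum_Ioc_consecutive _ (hf (by omega)) (hf (by omega))]

section GradedSum

variable {ι L E : Type*} [AddCommMonoid L] [AddCommMonoid E] {H : L → Set E}

theorem finsetSum_subset_of_add_subset (h0 : 0 ∈ H 0) (hadd : ∀ a b, H a + H b ⊆ H (a + b))
    (s : Finset ι) {F : ι → Set E} {g : ι → L} (hF : ∀ i ∈ s, F i ⊆ H (g i)) :
    ∑ i ∈ s, F i ⊆ H (∑ i ∈ s, g i) := by
  classical
  induction s using Finset.induction_on with
  | empty => simpa using h0
  | insert i s hi ih =>
    rw [sum_insert hi, sum_insert hi]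
    exact (Set.add_subset_add (hF i (mem_insert_self i s))
      (ih fun j hj => hF j (mem_insert_of_mem hj))).trans (hadd _ _)

theorem nsmul_subset_of_add_subset (h0 : 0 ∈ H 0) (hadd : ∀ a b, H a + H b ⊆ H (a + b))
    {F : Set E} {g : L} (hF : F ⊆ H g) (m : ℕ) : m • F ⊆ H (m • g) := by
  simpa using finsetSum_subset_of_add_subset h0 hadd (range m) fun _ _ => hF

end GradedSum

-- The casts in `jList`, `posList` and `Aset` elaborate as monadic lifts of `range n`, whence the
-- unfolding of `bind` and `pure`.
theorem mem_Pfin {n : ℕ} {p : ℤ × ℤ} : p ∈ Pfin n ↔ inP n p := by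
  obtain ⟨i, j⟩ := p
  simp only [Pfin, posList, jList, inP, mem_filter, List.mem_toFinset, List.mem_flatMap,
    List.mem_map, List.mem_append, Prod.mk.injEq, and_iff_right_iff_imp, bind, pure,
    List.mem_range, List.mem_singleton]
  intro ⟨h1, h2, h3, h4⟩
  refine ⟨i - 1, ⟨(i - 1).toNat, by omega, by omega⟩, j, ?_, by omega, rfl⟩
  rcases abs_cases j with ⟨hj, _⟩ | ⟨hj, _⟩
  · exact Or.inl ⟨j - 1, ⟨(j - 1).toNat, by omega, by omega⟩, by omega⟩
  · exact Or.inr ⟨j + n, ⟨(j + n).toNat, by omega, by omega⟩, by omega⟩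

theorem mem_Aset {n : ℕ} {p : ℤ × ℤ} : p ∈ Aset n ↔ 1 ≤ p.1 ∧ p.1 ≤ n ∧ p.2 = p.1 := by
  obtain ⟨i, j⟩ := p
  simp only [Aset, mem_image, Prod.mk.injEq, bind, pure, mem_sup, mem_range, mem_singleton]
  constructor
  · rintro ⟨t, ⟨s, hs, rfl⟩, rfl, rfl⟩; omega
  · rintro ⟨h1, h2, rfl⟩; exact ⟨j - 1, ⟨(j - 1).toNat, by omega, by omega⟩, by omega, by omega⟩

section Poset

variable {n : ℕ} {p q r : ℤ × ℤ}

theorem diag_mem_Pfin {i : ℕ} (hi : i ∈ Icc 1 n) : ((i : ℤ), (i : ℤ)) ∈ Pfin n := by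
  rw [mem_Icc] at hi
  rw [mem_Pfin, inP, abs_of_nonneg (Int.natCast_nonneg i)]
  omega

theorem diag_mem_Aset {i : ℕ} (hi : i ∈ Icc 1 n) : ((i : ℤ), (i : ℤ)) ∈ Aset n := by
  rw [mem_Icc] at hi
  rw [mem_Aset]
  omega

theorem ple_refl (p : ℤ × ℤ) : ple n p p := ⟨le_rfl, le_rfl⟩

instance : Std.Refl (ple n) := ⟨ple_refl⟩

theorem ple_trans (hpq : ple n p q) (hqr : ple n q r) : ple n p r :=
  ⟨hpq.1.trans hqr.1, hpq.2.trans hqr.2⟩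

theorem ple_antisymm (hp : inP n p) (hq : inP n q) (hpq : ple n p q) (hqp : ple n q p) :
    p = q := by
  obtain ⟨i, j⟩ := p
  obtain ⟨i', j'⟩ := q
  obtain ⟨hi, -, hj, hjn⟩ := hp
  obtain ⟨hi', -, hj', hjn'⟩ := hq
  dsimp only at hi hj hjn hi' hj' hjn'
  have hkey := le_antisymm hpq.2 hqp.2
  simp only [ordKey] at hkey
  rw [Prod.mk.injEq]
  refine ⟨le_antisymm hpq.1 hqp.1, ?_⟩
  rcases abs_cases j with ⟨_, _⟩ | ⟨_, _⟩ <;> rcases abs_cases j' with ⟨_, _⟩ | ⟨_, _⟩ <;>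
    split_ifs at hkey <;> omega

theorem ple_one_one (hp : inP n p) : ple n (1, 1) p := by
  obtain ⟨i, j⟩ := p
  obtain ⟨hi, -, hj, hjn⟩ := hp
  dsimp only at hi hj hjn
  refine ⟨hi, ?_⟩
  simp only [ordKey]
  rcases abs_cases j with ⟨_, _⟩ | ⟨_, _⟩ <;> split_ifs <;> omega

theorem exists_ple_forall_of_isChain {C : Finset (ℤ × ℤ)}
    (hC : IsChain (ple n) (C : Set (ℤ × ℤ))) (hne : C.Nonempty) : ∃ q ∈ C, ∀ r ∈ C, ple n q r := by
  obtain ⟨q, hq, hmin⟩ := C.exists_min_image (fun r => r.1 + ordKey n r.2) hne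
  refine ⟨q, hq, fun r hr => ?_⟩
  rcases hC.total hq hr with h | ⟨h1, h2⟩
  · exact h
  · have := hmin r hr
    exact ⟨by omega, by omega⟩

end Poset

theorem MO_subset (n : ℕ) (O J : Finset (ℤ × ℤ)) : MO n O J ⊆ J :=
  union_subset inter_subset_left (filter_subset _ _)

theorem mem_MO_iff_of_mem {n : ℕ} {O J : Finset (ℤ × ℤ)} {p : ℤ × ℤ} (hp : p ∈ O) :
    p ∈ MO n O J ↔ p ∈ J :=
  ⟨fun h => MO_subset n O J h, fun h => mem_union_left _ (mem_inter.2 ⟨h, hp⟩)⟩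

theorem mem_MO_iff_of_notMem {n : ℕ} {O J : Finset (ℤ × ℤ)} {p : ℤ × ℤ} (hp : p ∉ O) :
    p ∈ MO n O J ↔ p ∈ J ∧ ∀ q ∈ J, ple n p q → q = p := by
  simp [MO, maxPrec, hp]

def IsOChain (n : ℕ) (O C : Finset (ℤ × ℤ)) : Prop :=
  C ⊆ Pfin n ∧ IsChain (ple n) (C : Set (ℤ × ℤ)) ∧ ∀ q ∈ C, q ∈ O → ∀ r ∈ C, ple n q r → r = q

theorem IsOChain.mono {n : ℕ} {O C D : Finset (ℤ × ℤ)} (hC : IsOChain n O C) (hDC : D ⊆ C) :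
    IsOChain n O D :=
  ⟨hDC.trans hC.1, hC.2.1.mono (coe_subset.2 hDC),
    fun q hq hqO r hr => hC.2.2 q (hDC hq) hqO r (hDC hr)⟩

-- Two elements of `C ∩ M_O(J)` are comparable, and the lower one is in `O` or maximal in `J`.
theorem IsOChain.card_filter_mem_MO_le_one {n : ℕ} {O C : Finset (ℤ × ℤ)} (hC : IsOChain n O C)
    (J : Finset (ℤ × ℤ)) : (C.filter (· ∈ MO n O J)).card ≤ 1 := by
  have htop : ∀ a ∈ C, a ∈ MO n O J → ∀ b ∈ C, b ∈ MO n O J → ple n a b → b = a := by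
    intro a ha haM b hb hbM hab
    rcases mem_union.1 haM with h | h
    · exact hC.2.2 a ha (mem_inter.1 h).2 b hb hab
    · exact (mem_filter.1 h).2 b (MO_subset n O J hbM) hab
  refine card_le_one.2 fun a ha b hb => ?_
  obtain ⟨ha, haM⟩ := mem_filter.1 ha
  obtain ⟨hb, hbM⟩ := mem_filter.1 hb
  rcases hC.2.1.total ha hb with hab | hba
  · exact (htop a ha haM b hb hbM hab).symm
  · exact htop b hb hbM a ha haM hba

def QOIneq (R : Type*) [Semiring R] [PartialOrder R] (n : ℕ) (O : Finset (ℤ × ℤ))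
    (lam : ℕ → ℕ) : Set ((ℤ × ℤ) → R) :=
  {x | (∀ p, 0 ≤ x p) ∧ (∀ p, ¬ inP n p → x p = 0) ∧ (∀ i ∈ Icc 1 n, x (i, i) = lam i) ∧
    ∀ p ∈ O, ∀ C, IsOChain n O C → (∀ q ∈ C, plt n p q) → ∑ q ∈ C, x q ≤ x p}

/-- `ω_k = ε₁ + ⋯ + ε_k` in `ε`-coordinates; `weight n c` is `λ = c₁ω₁ + ⋯ + c_nω_n`, and
`x(i,i) = λ(i)` on `𝒬_O(λ)`. -/
def fundWeight (k : ℕ) : ℕ → ℕ := fun i => if i ≤ k then 1 else 0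

def weight (n : ℕ) (c : ℕ → ℕ) : ℕ → ℕ := ∑ k ∈ Icc 1 n, c k • fundWeight k

def QOvert (n : ℕ) (O : Finset (ℤ × ℤ)) (k : ℕ) : Set ((ℤ × ℤ) → ℝ) :=
  {x | ∃ J : Finset (ℤ × ℤ), IsIdeal n J ∧ (J ∩ Aset n).card = k ∧ x = indicMO n O J}

section Weight

variable {n : ℕ} {c : ℕ → ℕ}

theorem weight_apply (i : ℕ) : weight n c i = ∑ k ∈ Icc 1 n, if i ≤ k then c k else 0 := by
  simp [weight, fundWeight, Finset.sum_apply]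

theorem weight_antitone : Antitone (weight n c) := fun i j hij => by
  rw [weight_apply, weight_apply]
  exact sum_le_sum fun k _ => by split_ifs <;> omega

theorem weight_self_add_one : weight n c (n + 1) = 0 := by
  rw [weight_apply]
  exact sum_eq_zero fun k hk => if_neg (by rw [mem_Icc] at hk; omega)

theorem weight_eq_add_weight_add_one {k : ℕ} (hk : k ∈ Icc 1 n) :
    weight n c k = c k + weight n c (k + 1) := by
  have hck : ∑ j ∈ Icc 1 n, (if j = k then c j else 0) = c k := by
    rw [sum_ite_eq', if_pos hk]
  rw [weight_apply, weight_apply, ← hck, ← sum_add_distrib]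
  refine sum_congr rfl fun j _ => ?_
  split_ifs <;> subst_vars <;> omega

end Weight

section Ineq

variable {n : ℕ} {O : Finset (ℤ × ℤ)}

theorem zero_mem_QOIneq {R : Type*} [Semiring R] [PartialOrder R] :
    (0 : (ℤ × ℤ) → R) ∈ QOIneq R n O 0 :=
  ⟨fun _ => le_rfl, fun _ _ => rfl, fun _ _ => by simp, fun _ _ _ _ _ => by simp⟩

theorem QOIneq_add_subset {R : Type*} [Semiring R] [PartialOrder R] [IsOrderedRing R]
    (lam lam' : ℕ → ℕ) : QOIneq R n O lam + QOIneq R n O lam' ⊆ QOIneq R n O (lam + lam') := by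
  rintro _ ⟨x, ⟨hx0, hxP, hxd, hxc⟩, y, ⟨hy0, hyP, hyd, hyc⟩, rfl⟩
  refine ⟨fun p => add_nonneg (hx0 p) (hy0 p), fun p hp => by simp [hxP p hp, hyP p hp],
    fun i hi => by simp [hxd i hi, hyd i hi], fun p hp C hC hpC => ?_⟩
  simp only [Pi.add_apply, sum_add_distrib]
  exact add_le_add (hxc p hp C hC hpC) (hyc p hp C hC hpC)

theorem convex_QOIneq (lam : ℕ → ℕ) : Convex ℝ (QOIneq ℝ n O lam) := by
  rintro x ⟨hx0, hxP, hxd, hxc⟩ y ⟨hy0, hyP, hyd, hyc⟩ a b ha hb hab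
  refine ⟨fun p => add_nonneg (mul_nonneg ha (hx0 p)) (mul_nonneg hb (hy0 p)),
    fun p hp => by simp [hxP p hp, hyP p hp],
    fun i hi => by simp [hxd i hi, hyd i hi, ← add_mul, hab], fun p hp C hC hpC => ?_⟩
  simp only [Pi.add_apply, Pi.smul_apply, smul_eq_mul, sum_add_distrib, ← mul_sum]
  exact add_le_add (mul_le_mul_of_nonneg_left (hxc p hp C hC hpC) ha)
    (mul_le_mul_of_nonneg_left (hyc p hp C hC hpC) hb)

theorem natCast_mem_QOIneq_iff {X : (ℤ × ℤ) → ℕ} {lam : ℕ → ℕ} :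
    (fun p => (X p : ℝ)) ∈ QOIneq ℝ n O lam ↔ X ∈ QOIneq ℕ n O lam := by
  simp only [QOIneq, Set.mem_ofPred_eq, Nat.cast_nonneg, Nat.cast_eq_zero, Nat.cast_inj,
    ← Nat.cast_sum, Nat.cast_le, zero_le, Nat.cast_id]

theorem exists_natCast_of_isLat {x : (ℤ × ℤ) → ℝ} (hx : IsLat x) (hx0 : ∀ p, 0 ≤ x p) :
    ∃ X : (ℤ × ℤ) → ℕ, x = fun p => (X p : ℝ) := by
  choose m hm using hx
  refine ⟨fun p => (m p).toNat, funext fun p => ?_⟩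
  have := hx0 p
  rw [hm] at this ⊢
  exact_mod_cast (Int.toNat_of_nonneg (by exact_mod_cast this)).symm

theorem card_inter_Aset (J : Finset (ℤ × ℤ)) :
    (J ∩ Aset n).card = ((Icc 1 n).filter fun i : ℕ => ((i : ℤ), (i : ℤ)) ∈ J).card := by
  symm
  refine card_nbij (fun i => ((i : ℤ), (i : ℤ))) (fun i hi => ?_) (fun i _ j _ h => ?_) ?_
  · obtain ⟨hi, hiJ⟩ := mem_filter.1 hi
    exact mem_inter.2 ⟨hiJ, diag_mem_Aset hi⟩
  · simpa using h
  · rintro ⟨i, j⟩ hp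
    obtain ⟨hpJ, hpA⟩ := mem_inter.1 (mem_coe.1 hp)
    obtain ⟨h1, h2, hji⟩ := mem_Aset.1 hpA
    dsimp only at h1 h2 hji
    subst hji
    refine ⟨j.toNat, mem_filter.2 ⟨mem_Icc.2 ⟨by omega, by omega⟩, ?_⟩, ?_⟩
    · simpa [Int.toNat_of_nonneg (by omega : 0 ≤ j)] using hpJ
    · simp [Int.toNat_of_nonneg (by omega : 0 ≤ j)]

theorem diag_mem_iff_le_card {J : Finset (ℤ × ℤ)} (hJ : IsIdeal n J) {i : ℕ} (hi : i ∈ Icc 1 n) :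
    ((i : ℤ), (i : ℤ)) ∈ J ↔ i ≤ (J ∩ Aset n).card := by
  rw [card_inter_Aset, ← Finset.mem_iff_le_card _ _ (mem_Icc.1 hi).1, mem_filter,
    and_iff_right hi]
  · exact fun j hj => (mem_Icc.1 (mem_filter.1 hj).1).1
  · intro j hj i' hi' hi'j
    obtain ⟨hj, hjJ⟩ := mem_filter.1 hj
    have hi'n : i' ∈ Icc 1 n := mem_Icc.2 ⟨hi', hi'j.trans (mem_Icc.1 hj).2⟩
    refine mem_filter.2 ⟨hi'n, hJ.2 _ hjJ _ (diag_mem_Pfin hi'n) ⟨by simpa using hi'j, ?_⟩⟩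
    simp only [ordKey]
    split_ifs <;> omega

theorem indicMO_mem_QOIneq (hA : Aset n ⊆ O) (hO : O ⊆ Pfin n) {J : Finset (ℤ × ℤ)}
    (hJ : IsIdeal n J) : indicMO n O J ∈ QOIneq ℝ n O (fundWeight (J ∩ Aset n).card) := by
  refine ⟨fun p => by unfold indicMO; split_ifs <;> norm_num, fun p hp => ?_, fun i hi => ?_,
    fun p hpO C hC hpC => ?_⟩
  · exact if_neg fun hpM => hp (hJ.1 p (MO_subset n O J hpM))
  · simp only [indicMO, fundWeight, mem_MO_iff_of_mem (hA (diag_mem_Aset hi)),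
      diag_mem_iff_le_card hJ hi]
    split_ifs <;> simp
  have hle1 := hC.card_filter_mem_MO_le_one J
  simp only [indicMO]
  rw [sum_boole]
  split_ifs with hpM
  · exact_mod_cast hle1
  · have hempty : C.filter (· ∈ MO n O J) = ∅ := filter_eq_empty_iff.2 fun s hs hsM =>
      hpM ((mem_MO_iff_of_mem hpO).2 (hJ.2 s (MO_subset n O J hsM) p (hO hpO) (hpC s hs).1))
    simp [hempty]

theorem QO_subset_QOIneq (hA : Aset n ⊆ O) (hO : O ⊆ Pfin n) (c : ℕ → ℕ) :
    QO n O c ⊆ QOIneq ℝ n O (weight n c) := by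
  have hfund : ∀ k, QOfund n O k ⊆ QOIneq ℝ n O (fundWeight k) := fun k =>
    convexHull_min (by rintro _ ⟨J, hJ, rfl, rfl⟩; exact indicMO_mem_QOIneq hA hO hJ)
      (convex_QOIneq _)
  exact finsetSum_subset_of_add_subset zero_mem_QOIneq QOIneq_add_subset _ fun k _ =>
    nsmul_subset_of_add_subset zero_mem_QOIneq QOIneq_add_subset (hfund k) (c k)

end Ineq

def admChains (n : ℕ) (O : Finset (ℤ × ℤ)) (p : ℤ × ℤ) : Finset (Finset (ℤ × ℤ)) :=
  (Pfin n).powerset.filter fun C => IsOChain n O C ∧ p ∈ C ∧ ∀ q ∈ C, ple n p q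

/-- Modelled on Stanley's transfer map from chain to order polytopes. -/
def transfer (n : ℕ) (O : Finset (ℤ × ℤ)) (X : (ℤ × ℤ) → ℕ) (p : ℤ × ℤ) : ℕ :=
  (admChains n O p).sup fun C => ∑ q ∈ C, X q

def transferAbove (n : ℕ) (O : Finset (ℤ × ℤ)) (X : (ℤ × ℤ) → ℕ) (p : ℤ × ℤ) : ℕ :=
  ((Pfin n).filter (plt n p)).sup (transfer n O X)

def levelIdeal (n : ℕ) (O : Finset (ℤ × ℤ)) (X : (ℤ × ℤ) → ℕ) (t : ℕ) : Finset (ℤ × ℤ) :=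
  (Pfin n).filter fun p => t ≤ transfer n O X p

section Transfer

variable {n : ℕ} {O : Finset (ℤ × ℤ)} {X : (ℤ × ℤ) → ℕ} {lam : ℕ → ℕ} {p q : ℤ × ℤ}

theorem mem_admChains {C : Finset (ℤ × ℤ)} :
    C ∈ admChains n O p ↔ IsOChain n O C ∧ p ∈ C ∧ ∀ q ∈ C, ple n p q := by
  simp only [admChains, mem_filter, mem_powerset]
  exact ⟨fun h => h.2, fun h => ⟨h.1.1, h⟩⟩

theorem singleton_mem_admChains (hp : p ∈ Pfin n) : {p} ∈ admChains n O p :=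
  mem_admChains.2 ⟨⟨singleton_subset_iff.2 hp, by simp, by simp⟩, mem_singleton_self p,
    by simp [ple_refl]⟩

theorem sum_le_transfer {C : Finset (ℤ × ℤ)} (hC : C ∈ admChains n O p) :
    ∑ q ∈ C, X q ≤ transfer n O X p :=
  le_sup (f := fun C => ∑ q ∈ C, X q) hC

theorem le_transfer (hp : p ∈ Pfin n) : X p ≤ transfer n O X p := by
  simpa using sum_le_transfer (X := X) (singleton_mem_admChains (O := O) hp)

theorem insert_mem_admChains (hp : p ∈ Pfin n) (hpO : p ∉ O) (hpq : plt n p q)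
    {C : Finset (ℤ × ℤ)} (hC : C ∈ admChains n O q) : p ∉ C ∧ insert p C ∈ admChains n O p := by
  obtain ⟨⟨hCP, hchain, htop⟩, hqC, hmin⟩ := mem_admChains.1 hC
  have hbelow : ∀ r ∈ C, ple n p r := fun r hr => ple_trans hpq.1 (hmin r hr)
  have hpC : p ∉ C := fun hpC => hpq.2
    (ple_antisymm (mem_Pfin.1 hp) (mem_Pfin.1 (hCP hqC)) hpq.1 (hmin p hpC))
  refine ⟨hpC, mem_admChains.2 ⟨⟨insert_subset hp hCP, ?_, ?_⟩, mem_insert_self p C, ?_⟩⟩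
  · rw [coe_insert]
    exact hchain.insert fun r hr _ => Or.inl (hbelow r hr)
  · intro s hs hsO r hr hsr
    rcases mem_insert.1 hs with rfl | hs
    · exact absurd hsO hpO
    rcases mem_insert.1 hr with hrp | hr
    · rw [hrp] at hsr
      have hps := ple_antisymm (mem_Pfin.1 hp) (mem_Pfin.1 (hCP hs)) (hbelow s hs) hsr
      exact absurd (hps ▸ hsO) hpO
    · exact htop s hs hsO r hr hsr
  · intro r hr
    rcases mem_insert.1 hr with rfl | hr
    exacts [ple_refl r, hbelow r hr]

theorem transfer_antitone (hX : X ∈ QOIneq ℕ n O lam) (hp : p ∈ Pfin n) (hpq : ple n p q) :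
    transfer n O X q ≤ transfer n O X p := by
  rcases eq_or_ne p q with rfl | hne
  · rfl
  refine Finset.sup_le fun C hC => ?_
  by_cases hpO : p ∈ O
  · -- `C` lies strictly above `p`, so the chain inequality at `p` applies
    obtain ⟨hOC, hqC, hmin⟩ := mem_admChains.1 hC
    refine (hX.2.2.2 p hpO C hOC fun r hr => ⟨ple_trans hpq (hmin r hr), ?_⟩).trans
      (le_transfer hp)
    rintro rfl
    exact hne (ple_antisymm (mem_Pfin.1 hp) (mem_Pfin.1 (hOC.1 hqC)) hpq (hmin p hr))
  · obtain ⟨-, hins⟩ := insert_mem_admChains hp hpO ⟨hpq, hne⟩ hC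
    exact (sum_le_sum_of_subset (subset_insert p C)).trans (sum_le_transfer hins)

theorem transfer_eq_of_mem (hp : p ∈ Pfin n) (hpO : p ∈ O) : transfer n O X p = X p := by
  refine le_antisymm (Finset.sup_le fun C hC => ?_) (le_transfer hp)
  obtain ⟨hOC, hpC, hmin⟩ := mem_admChains.1 hC
  rw [eq_singleton_iff_unique_mem.2 ⟨hpC, fun r hr => hOC.2.2 p hpC hpO r hr (hmin r hr)⟩,
    sum_singleton]

theorem transfer_eq_add_transferAbove (hp : p ∈ Pfin n) (hpO : p ∉ O) :
    transfer n O X p = X p + transferAbove n O X p := by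
  apply le_antisymm
  · refine Finset.sup_le fun C hC => ?_
    obtain ⟨hOC, hpC, hmin⟩ := mem_admChains.1 hC
    rw [← add_sum_erase C X hpC]
    gcongr
    rcases (C.erase p).eq_empty_or_nonempty with he | hne
    · simp [he]
    obtain ⟨q, hq, hqmin⟩ :=
      exists_ple_forall_of_isChain (hOC.mono (erase_subset p C)).2.1 hne
    have hpq : q ∈ (Pfin n).filter (plt n p) :=
      mem_filter.2 ⟨hOC.1 (mem_of_mem_erase hq), hmin q (mem_of_mem_erase hq),
        (ne_of_mem_erase hq).symm⟩
    exact (sum_le_transfer (mem_admChains.2 ⟨hOC.mono (erase_subset p C), hq, hqmin⟩)).trans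
      (le_sup (f := transfer n O X) hpq)
  · rcases ((Pfin n).filter (plt n p)).eq_empty_or_nonempty with he | hne
    · simpa [transferAbove, he] using le_transfer hp
    obtain ⟨q, hq, hqV⟩ := exists_mem_eq_sup _ hne (transfer n O X)
    obtain ⟨hqP, hpq⟩ := mem_filter.1 hq
    obtain ⟨C, hC, hCq⟩ :=
      exists_mem_eq_sup _ ⟨_, singleton_mem_admChains (O := O) hqP⟩ fun C => ∑ r ∈ C, X r
    obtain ⟨hpC, hins⟩ := insert_mem_admChains hp hpO hpq hC
    calc X p + transferAbove n O X p = ∑ r ∈ insert p C, X r := by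
          rw [sum_insert hpC, transferAbove, hqV, transfer, hCq]
      _ ≤ transfer n O X p := sum_le_transfer hins

theorem isIdeal_levelIdeal (hX : X ∈ QOIneq ℕ n O lam) (t : ℕ) :
    IsIdeal n (levelIdeal n O X t) :=
  ⟨fun _ hp => mem_Pfin.1 (mem_filter.1 hp).1, fun _ hp _ hq hqp =>
    mem_filter.2 ⟨hq, (mem_filter.1 hp).2.trans (transfer_antitone hX hq hqp)⟩⟩

theorem mem_MO_levelIdeal_iff (hp : p ∈ Pfin n) {t : ℕ} (ht : 0 < t) :
    p ∈ MO n O (levelIdeal n O X t) ↔ t ∈ Ioc (transfer n O X p - X p) (transfer n O X p) := by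
  have hmem : p ∈ levelIdeal n O X t ↔ t ≤ transfer n O X p := by simp [levelIdeal, hp]
  by_cases hpO : p ∈ O
  · rw [mem_MO_iff_of_mem hpO, hmem, mem_Ioc, transfer_eq_of_mem hp hpO]
    omega
  have hmax : (∀ q ∈ levelIdeal n O X t, ple n p q → q = p) ↔ transferAbove n O X p < t := by
    simp only [transferAbove, Finset.sup_lt_iff ht, levelIdeal, mem_filter, plt]
    constructor
    · rintro h q ⟨hq, hpq, hne⟩
      by_contra htq
      exact hne (h q ⟨hq, not_lt.1 htq⟩ hpq).symm
    · rintro h q ⟨hq, htq⟩ hpq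
      by_contra hne
      exact (h q ⟨hq, hpq, Ne.symm hne⟩).not_ge htq
  rw [mem_MO_iff_of_notMem hpO, hmem, hmax, mem_Ioc, transfer_eq_add_transferAbove hp hpO]
  omega

theorem card_filter_mem_MO_levelIdeal (hX : X ∈ QOIneq ℕ n O lam) {T : ℕ}
    (hT : ∀ p ∈ Pfin n, transfer n O X p ≤ T) (p : ℤ × ℤ) :
    ((Ioc 0 T).filter fun t => p ∈ MO n O (levelIdeal n O X t)).card = X p := by
  by_cases hp : p ∈ Pfin n
  · rw [filter_congr fun t ht => mem_MO_levelIdeal_iff hp (mem_Ioc.1 ht).1, filter_mem_eq_inter,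
      inter_eq_right.2 (Ioc_subset_Ioc (Nat.zero_le _) (hT p hp)), Nat.card_Ioc]
    have := le_transfer (O := O) hp (X := X)
    omega
  · rw [hX.2.1 p (mt mem_Pfin.2 hp), card_eq_zero]
    exact filter_eq_empty_iff.2 fun t _ hpM =>
      hp (mem_filter.1 (MO_subset n O _ hpM)).1

theorem natCast_eq_sum_indicMO_levelIdeal (hX : X ∈ QOIneq ℕ n O lam) {T : ℕ}
    (hT : ∀ p ∈ Pfin n, transfer n O X p ≤ T) :
    (fun p => (X p : ℝ)) = ∑ t ∈ Ioc 0 T, indicMO n O (levelIdeal n O X t) := by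
  funext p
  simp only [Finset.sum_apply, indicMO]
  rw [sum_boole, card_filter_mem_MO_levelIdeal hX hT p]

theorem transfer_diag (hX : X ∈ QOIneq ℕ n O lam) (hA : Aset n ⊆ O) {i : ℕ} (hi : i ∈ Icc 1 n) :
    transfer n O X ((i : ℤ), (i : ℤ)) = lam i :=
  (transfer_eq_of_mem (diag_mem_Pfin hi) (hA (diag_mem_Aset hi))).trans (hX.2.2.1 i hi)

theorem transfer_le_lam_one (hX : X ∈ QOIneq ℕ n O lam) (hA : Aset n ⊆ O) (hp : p ∈ Pfin n) :
    transfer n O X p ≤ lam 1 := by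
  have h1 : 1 ∈ Icc 1 n := by
    obtain ⟨h1, h2, -⟩ := mem_Pfin.1 hp
    exact mem_Icc.2 ⟨le_rfl, by omega⟩
  calc transfer n O X p ≤ transfer n O X (1, 1) :=
        transfer_antitone hX (by simpa using diag_mem_Pfin h1) (ple_one_one (mem_Pfin.1 hp))
    _ = lam 1 := by simpa using transfer_diag hX hA h1

theorem card_levelIdeal_inter_Aset (hX : X ∈ QOIneq ℕ n O lam) (hA : Aset n ⊆ O)
    (hlam : Antitone lam) {k t : ℕ} (hk : k ∈ Icc 1 n) (ht : t ∈ Ioc (lam (k + 1)) (lam k)) :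
    (levelIdeal n O X t ∩ Aset n).card = k := by
  rw [mem_Icc] at hk
  rw [mem_Ioc] at ht
  have hdiag : (Icc 1 n).filter (fun i : ℕ => ((i : ℤ), (i : ℤ)) ∈ levelIdeal n O X t)
      = Icc 1 k := by
    ext i
    simp only [levelIdeal, mem_filter]
    constructor
    · rintro ⟨hi, -, hti⟩
      rw [transfer_diag hX hA hi] at hti
      rw [mem_Icc] at hi ⊢
      by_contra hik
      have := hlam (show k + 1 ≤ i by omega)
      omega
    · intro hi
      have hin : i ∈ Icc 1 n := mem_Icc.2 ⟨(mem_Icc.1 hi).1, (mem_Icc.1 hi).2.trans hk.2⟩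
      rw [transfer_diag hX hA hin]
      exact ⟨hin, diag_mem_Pfin hin, ht.2.trans (hlam (mem_Icc.1 hi).2)⟩
  rw [card_inter_Aset, hdiag, Nat.card_Icc, Nat.add_sub_cancel]

end Transfer

def latticePoints : AddSubmonoid ((ℤ × ℤ) → ℝ) where
  carrier := {x | IsLat x}
  zero_mem' := fun _ => ⟨0, by simp⟩
  add_mem' := fun {x y} hx hy p => by
    obtain ⟨a, ha⟩ := hx p
    obtain ⟨b, hb⟩ := hy p
    exact ⟨a + b, by simp [ha, hb]⟩

theorem isLat_indicMO (n : ℕ) (O J : Finset (ℤ × ℤ)) : IsLat (indicMO n O J) := fun p => by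
  unfold indicMO
  split_ifs
  exacts [⟨1, by simp⟩, ⟨0, by simp⟩]

section Decomposition

variable {n : ℕ} {O : Finset (ℤ × ℤ)}

theorem mem_sum_nsmul_QOvert (hA : Aset n ⊆ O) (hO : O ⊆ Pfin n) {c : ℕ → ℕ}
    {x : (ℤ × ℤ) → ℝ} (hx : x ∈ QO n O c) (hlat : IsLat x) :
    x ∈ ∑ k ∈ Icc 1 n, c k • QOvert n O k := by
  have hxI := QO_subset_QOIneq hA hO c hx
  obtain ⟨X, rfl⟩ := exists_natCast_of_isLat hlat hxI.1
  have hX := natCast_mem_QOIneq_iff.1 hxI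
  rw [natCast_eq_sum_indicMO_levelIdeal hX fun p hp => transfer_le_lam_one hX hA hp,
    ← weight_self_add_one (n := n) (c := c),
    ← sum_Icc_sum_Ioc_of_antitone weight_antitone]
  refine Set.finsetSum_mem_finsetSum _ _ _ fun k hk => ?_
  have hck : c k = (Ioc (weight n c (k + 1)) (weight n c k)).card := by
    rw [Nat.card_Ioc, weight_eq_add_weight_add_one hk, Nat.add_sub_cancel]
  rw [hck, ← sum_const]
  exact Set.finsetSum_mem_finsetSum _ _ _ fun t ht => ⟨levelIdeal n O X t,
    isIdeal_levelIdeal hX t, card_levelIdeal_inter_Aset hX hA weight_antitone hk ht, rfl⟩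

theorem QO_inter_isLat (hA : Aset n ⊆ O) (hO : O ⊆ Pfin n) (c : ℕ → ℕ) :
    QO n O c ∩ {x | IsLat x} = ∑ k ∈ Icc 1 n, c k • QOvert n O k := by
  refine Set.Subset.antisymm (fun x hx => mem_sum_nsmul_QOvert hA hO hx.1 hx.2)
    (Set.subset_inter ?_ ?_)
  · exact Set.finsetSum_subset_finsetSum _ _ _ fun k _ =>
      Set.nsmul_subset_nsmul_left (subset_convexHull ℝ _)
  · intro x hx
    obtain ⟨g, hg, rfl⟩ := (Set.mem_finsetSum _ _ _).1 hx
    refine latticePoints.sum_mem fun k hk => AddSubmonoid.nsmul_subset (fun _ hy => ?_) (hg hk)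
    obtain ⟨J, -, -, rfl⟩ := hy
    exact isLat_indicMO n O J

end Decomposition

/-- Minkowski sum property of lattice points:
`𝒬_O(λ+μ) ∩ ℤ^P = (𝒬_O(λ) ∩ ℤ^P) + (𝒬_O(μ) ∩ ℤ^P)`. -/
theorem stmt8 (n : ℕ) (O : Finset (ℤ × ℤ)) (hA : Aset n ⊆ O) (hO : O ⊆ Pfin n)
    (a b : ℕ → ℕ) :
    QO n O (fun k => a k + b k) ∩ {x | IsLat x}
      = (QO n O a ∩ {x | IsLat x}) + (QO n O b ∩ {x | IsLat x}) := by
  simp only [QO_inter_isLat hA hO, add_nsmul, sum_add_distrib]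

end
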